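/- The function φ(z) = z (I₀(z) − I₁(z)) / I₀(z) satisfies lim_{z→+∞} φ(z) = 1/2, and φ is bounded on [0, ∞). -/

import Mathlib

open Real Filter

/-- The modified Bessel function of integer order `n`:
`Iₙ(μ) = (1/(2π)) ∫₀^{2π} e^{μ cos θ} cos (n θ) dθ`. -/
noncomputable def besselI (n : ℤ) (μ : ℝ) : ℝ :=
  (1 / (2 * Real.pi)) * ∫ θ in (0:ℝ)..(2 * Real.pi),
    Real.exp (μ * Real.cos θ) * Real.cos ((n : ℝ) * θ)

/-!
Folding `[0, 2π]` onto `[0, π]` and factoring out `e^z` gives `I₀(z) = e^z M₀(z) / π` and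
`I₀(z) - I₁(z) = e^z M₁(z) / π`, where `Mₖ(z) = ∫₀^π (1 - cos θ)^k e^{-z (1 - cos θ)} dθ`, so
`φ(z) = z M₁(z) / M₀(z)`. Laplace's method (substitute `θ = u / √z` and apply dominated
convergence, using `2u²/π² ≤ z (1 - cos (u/√z)) ≤ u²/2`) gives
`√z zᵏ Mₖ(z) → ∫₀^∞ (u²/2)^k e^{-u²/2} du`, and the ratio of the limits for `k = 1` and `k = 0`
is `1/2`. Boundedness on `[0, ∞)` follows from the limit together with `M₁ ≤ 2 M₀`.
-/

open MeasureTheory Set Topology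

theorem integral_zero_two_pi_eq_two_mul_integral_zero_pi {f : ℝ → ℝ}
    (hf : IntervalIntegrable f volume 0 (2 * π)) (hsymm : ∀ θ, f (2 * π - θ) = f θ) :
    ∫ θ in (0:ℝ)..(2 * π), f θ = 2 * ∫ θ in (0:ℝ)..π, f θ := by
  have hπ := pi_pos.le
  have h₁ : IntervalIntegrable f volume 0 π := hf.mono_set (uIcc_subset_uIcc_left (by
    rw [uIcc_of_le (by linarith)]; constructor <;> linarith))
  have h₂ : IntervalIntegrable f volume π (2 * π) := hf.mono_set (uIcc_subset_uIcc_right (by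
    rw [uIcc_of_le (by linarith)]; constructor <;> linarith))
  have hreflect : ∫ θ in π..(2 * π), f θ = ∫ θ in (0:ℝ)..π, f θ := by
    have := intervalIntegral.integral_comp_sub_left f (2 * π) (a := 0) (b := π)
    rw [sub_zero, show 2 * π - π = π by ring] at this
    simp only [hsymm] at this
    exact this.symm
  rw [← intervalIntegral.integral_add_adjacent_intervals h₁ h₂, hreflect, two_mul]

theorem besselI_eq_integral_zero_pi (n : ℤ) (z : ℝ) :
    besselI n z = π⁻¹ * ∫ θ in (0:ℝ)..π, exp (z * cos θ) * cos (n * θ) := by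
  rw [besselI, integral_zero_two_pi_eq_two_mul_integral_zero_pi
    (Continuous.intervalIntegrable (by fun_prop) _ _)]
  · field_simp
  · intro θ
    rw [cos_two_pi_sub, ← cos_int_mul_two_pi_sub (n * θ) n]
    ring_nf

noncomputable def cosMoment (k : ℕ) (z : ℝ) : ℝ :=
  ∫ θ in (0:ℝ)..π, (1 - cos θ) ^ k * exp (-(z * (1 - cos θ)))

theorem integral_exp_mul_cos_mul_one_sub_cos_pow (k : ℕ) (z : ℝ) :
    ∫ θ in (0:ℝ)..π, exp (z * cos θ) * (1 - cos θ) ^ k = exp z * cosMoment k z := by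
  rw [cosMoment, ← intervalIntegral.integral_const_mul]
  congr 1 with θ
  rw [mul_left_comm, ← exp_add]
  ring_nf

theorem besselI_zero_eq (z : ℝ) : besselI 0 z = exp z * cosMoment 0 z / π := by
  rw [besselI_eq_integral_zero_pi, ← integral_exp_mul_cos_mul_one_sub_cos_pow]
  simp [div_eq_inv_mul, mul_comm]

theorem besselI_zero_sub_besselI_one (z : ℝ) :
    besselI 0 z - besselI 1 z = exp z * cosMoment 1 z / π := by
  rw [besselI_eq_integral_zero_pi, besselI_eq_integral_zero_pi, ← mul_sub,
    ← intervalIntegral.integral_sub (Continuous.intervalIntegrable (by fun_prop) _ _)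
      (Continuous.intervalIntegrable (by fun_prop) _ _),
    ← integral_exp_mul_cos_mul_one_sub_cos_pow]
  simp only [Int.cast_zero, Int.cast_one, zero_mul, one_mul, cos_zero, pow_one, mul_one, mul_sub,
    div_eq_inv_mul]

theorem cosMoment_nonneg (k : ℕ) (z : ℝ) : 0 ≤ cosMoment k z :=
  intervalIntegral.integral_nonneg pi_pos.le fun θ _ =>
    mul_nonneg (pow_nonneg (sub_nonneg.2 (cos_le_one θ)) k) (exp_pos _).le

theorem cosMoment_zero_pos (z : ℝ) : 0 < cosMoment 0 z := by
  simpa [cosMoment] using intervalIntegral.intervalIntegral_pos_of_pos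
    (Continuous.intervalIntegrable (by fun_prop) _ _) (fun θ => exp_pos (-(z * (1 - cos θ))))
    pi_pos

theorem cosMoment_succ_le (k : ℕ) (z : ℝ) : cosMoment (k + 1) z ≤ 2 * cosMoment k z := by
  rw [cosMoment, cosMoment, ← intervalIntegral.integral_const_mul]
  refine intervalIntegral.integral_mono_on pi_pos.le
    (Continuous.intervalIntegrable (by fun_prop) _ _)
    (Continuous.intervalIntegrable (by fun_prop) _ _) fun θ _ => ?_
  have h₀ : 0 ≤ (1 - cos θ) ^ k * exp (-(z * (1 - cos θ))) :=
    mul_nonneg (pow_nonneg (sub_nonneg.2 (cos_le_one θ)) k) (exp_pos _).le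
  have h₂ : 1 - cos θ ≤ 2 := by linarith [neg_one_le_cos θ]
  calc (1 - cos θ) ^ (k + 1) * exp (-(z * (1 - cos θ)))
      = (1 - cos θ) * ((1 - cos θ) ^ k * exp (-(z * (1 - cos θ)))) := by ring
    _ ≤ 2 * ((1 - cos θ) ^ k * exp (-(z * (1 - cos θ)))) := mul_le_mul_of_nonneg_right h₂ h₀

theorem phi_eq_mul_cosMoment_div (z : ℝ) :
    z * (besselI 0 z - besselI 1 z) / besselI 0 z = z * cosMoment 1 z / cosMoment 0 z := by
  rw [besselI_zero_sub_besselI_one, besselI_zero_eq]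
  have := (cosMoment_zero_pos z).ne'
  field_simp

theorem one_sub_cos_eq_sq_mul_sinc_sq (t : ℝ) : 1 - cos t = t ^ 2 / 2 * sinc (t / 2) ^ 2 := by
  rcases eq_or_ne t 0 with rfl | ht
  · simp
  rw [sinc_of_ne_zero (by positivity), div_pow, sin_sq_eq_half_sub]
  field_simp

noncomputable def scaledCosGap (z u : ℝ) : ℝ := z * (1 - cos (u / √z))

theorem scaledCosGap_eq {z : ℝ} (hz : 0 < z) (u : ℝ) :
    scaledCosGap z u = u ^ 2 / 2 * sinc (u / (2 * √z)) ^ 2 := by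
  rw [scaledCosGap, one_sub_cos_eq_sq_mul_sinc_sq, div_div, mul_comm (√z), div_pow (u) (√z),
    sq_sqrt hz.le]
  field_simp

theorem tendsto_scaledCosGap (u : ℝ) :
    Tendsto (fun z => scaledCosGap z u) atTop (𝓝 (u ^ 2 / 2)) := by
  have hsinc : Tendsto (fun z => sinc (u / (2 * √z))) atTop (𝓝 1) := by
    rw [← sinc_zero]
    refine (continuous_sinc.tendsto 0).comp ?_
    exact tendsto_const_nhds.div_atTop (tendsto_sqrt_atTop.const_mul_atTop two_pos)
  have := (hsinc.pow 2).const_mul (u ^ 2 / 2)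
  rw [one_pow, mul_one] at this
  refine this.congr' ?_
  filter_upwards [eventually_gt_atTop 0] with z hz
  exact (scaledCosGap_eq hz u).symm

theorem scaledCosGap_nonneg {z : ℝ} (hz : 0 ≤ z) (u : ℝ) : 0 ≤ scaledCosGap z u :=
  mul_nonneg hz (sub_nonneg.2 (cos_le_one _))

theorem scaledCosGap_le {z : ℝ} (hz : 0 < z) (u : ℝ) : scaledCosGap z u ≤ u ^ 2 / 2 := by
  rw [scaledCosGap_eq hz]
  exact mul_le_of_le_one_right (by positivity) ((sq_le_one_iff_abs_le_one _).2 (abs_sinc_le_one _))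

theorem mul_sq_le_scaledCosGap {z u : ℝ} (hz : 0 < z) (hu : |u| ≤ π * √z) :
    2 / π ^ 2 * u ^ 2 ≤ scaledCosGap z u := by
  have hs : 0 < √z := sqrt_pos.2 hz
  have hcos := cos_le_one_sub_mul_cos_sq (x := u / √z) (by
    rwa [abs_div, abs_of_pos hs, div_le_iff₀ hs])
  calc 2 / π ^ 2 * u ^ 2 = z * (2 / π ^ 2 * (u / √z) ^ 2) := by
        rw [div_pow, sq_sqrt hz.le]; field_simp
    _ ≤ scaledCosGap z u := mul_le_mul_of_nonneg_left (by linarith) hz.le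

theorem sqrt_mul_pow_mul_cosMoment {z : ℝ} (hz : 0 < z) (k : ℕ) :
    √z * z ^ k * cosMoment k z = ∫ u in Ioi 0,
      (Iic (π * √z)).indicator (fun u => scaledCosGap z u ^ k * exp (-scaledCosGap z u)) u := by
  have hs : √z ≠ 0 := (sqrt_pos.2 hz).ne'
  have hsub := intervalIntegral.integral_comp_div (a := 0) (b := π * √z)
    (fun θ => (z * (1 - cos θ)) ^ k * exp (-(z * (1 - cos θ)))) hs
  rw [zero_div, mul_div_cancel_right₀ _ hs, smul_eq_mul] at hsub
  rw [setIntegral_indicator measurableSet_Iic, Ioi_inter_Iic,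
    ← intervalIntegral.integral_of_le (by positivity)]
  simp only [scaledCosGap]
  rw [hsub, cosMoment, mul_assoc, ← intervalIntegral.integral_const_mul]
  simp only [mul_pow, mul_assoc]

theorem integrableOn_Ioi_sq_half_pow_mul_exp_neg_mul_sq (k : ℕ) {b : ℝ} (hb : 0 < b) :
    IntegrableOn (fun u : ℝ => (u ^ 2 / 2) ^ k * exp (-b * u ^ 2)) (Ioi 0) := by
  have := (integrableOn_rpow_mul_exp_neg_mul_sq hb (s := (2 * k : ℕ))
    (neg_one_lt_zero.trans_le (Nat.cast_nonneg _))).const_mul ((1 / 2) ^ k)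
  refine IntegrableOn.congr_fun this (fun u _ => ?_) measurableSet_Ioi
  rw [rpow_natCast, pow_mul, div_pow, div_pow]
  ring

theorem tendsto_sqrt_mul_pow_mul_cosMoment (k : ℕ) :
    Tendsto (fun z => √z * z ^ k * cosMoment k z) atTop
      (𝓝 (∫ u in Ioi 0, (u ^ 2 / 2) ^ k * exp (-(u ^ 2 / 2)))) := by
  have hcont : Continuous fun t : ℝ => t ^ k * exp (-t) := by fun_prop
  refine (tendsto_integral_filter_of_dominated_convergence (F := fun z u =>
    (Iic (π * √z)).indicator (fun u => scaledCosGap z u ^ k * exp (-scaledCosGap z u)) u)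
    (fun u => (u ^ 2 / 2) ^ k * exp (-(2 / π ^ 2) * u ^ 2)) ?meas ?bound
    (integrableOn_Ioi_sq_half_pow_mul_exp_neg_mul_sq k (by positivity)) ?lim).congr' ?eq
  case meas =>
    exact Eventually.of_forall fun z => (Measurable.indicator (by unfold scaledCosGap; fun_prop)
      measurableSet_Iic).aestronglyMeasurable
  case bound =>
    filter_upwards [eventually_gt_atTop (0 : ℝ)] with z hz
    filter_upwards [ae_restrict_mem measurableSet_Ioi] with u (hu₀ : 0 < u)
    by_cases hu : u ∈ Iic (π * √z)
    · have hg := scaledCosGap_nonneg hz.le u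
      have hlower := mul_sq_le_scaledCosGap hz (by rwa [abs_of_pos hu₀])
      rw [indicator_of_mem hu, norm_of_nonneg (by positivity)]
      gcongr
      · exact scaledCosGap_le hz u
      · linarith
    · rw [indicator_of_notMem hu, norm_zero]
      positivity
  case lim =>
    filter_upwards [ae_restrict_mem measurableSet_Ioi] with u hu
    refine ((hcont.tendsto _).comp (tendsto_scaledCosGap u)).congr' ?_
    filter_upwards [(tendsto_sqrt_atTop.const_mul_atTop pi_pos).eventually_ge_atTop u] with z hz
    simp only [Function.comp_apply, indicator_of_mem (show u ∈ Iic (π * √z) from hz)]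
  case eq =>
    filter_upwards [eventually_gt_atTop (0 : ℝ)] with z hz
    exact (sqrt_mul_pow_mul_cosMoment hz k).symm

theorem integral_Ioi_sq_mul_exp_neg_mul_sq {b : ℝ} (hb : 0 < b) :
    ∫ u in Ioi 0, u ^ 2 * exp (-b * u ^ 2) = (2 * b)⁻¹ * ∫ u in Ioi 0, exp (-b * u ^ 2) := by
  have h₂ := integral_rpow_mul_exp_neg_mul_rpow two_pos (by norm_num : (-1 : ℝ) < 2) hb
  have h₀ := integral_rpow_mul_exp_neg_mul_rpow two_pos (by norm_num : (-1 : ℝ) < 0) hb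
  simp only [rpow_two, rpow_zero, one_mul] at h₂ h₀
  rw [h₂, h₀, show ((2 : ℝ) + 1) / 2 = 1 / 2 + 1 by norm_num, Gamma_add_one (by norm_num),
    show -((2 : ℝ) + 1) / 2 = -1 + -(0 + 1) / 2 by norm_num, rpow_add hb, rpow_neg_one]
  field_simp
  norm_num

theorem tendsto_mul_cosMoment_one_div_cosMoment_zero :
    Tendsto (fun z => z * cosMoment 1 z / cosMoment 0 z) atTop (𝓝 (1 / 2)) := by
  have hexp (u : ℝ) : exp (-(u ^ 2 / 2)) = exp (-(1 / 2) * u ^ 2) := by ring_nf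
  have hc₀ : 0 < ∫ u in Ioi (0 : ℝ), exp (-(u ^ 2 / 2)) := by
    simp only [hexp, integral_gaussian_Ioi]
    positivity
  have hc₁ : ∫ u in Ioi (0 : ℝ), u ^ 2 / 2 * exp (-(u ^ 2 / 2)) =
      1 / 2 * ∫ u in Ioi (0 : ℝ), exp (-(u ^ 2 / 2)) := by
    simp only [hexp, div_mul_eq_mul_div, integral_div,
      integral_Ioi_sq_mul_exp_neg_mul_sq one_half_pos]
    norm_num
  have := (tendsto_sqrt_mul_pow_mul_cosMoment 1).div (tendsto_sqrt_mul_pow_mul_cosMoment 0) (by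
    simpa using hc₀.ne')
  simp only [pow_one, pow_zero, one_mul, mul_one, hc₁, mul_div_assoc, div_self hc₀.ne'] at this
  refine this.congr' ?_
  filter_upwards [eventually_gt_atTop (0 : ℝ)] with z hz
  rw [Pi.div_apply, mul_assoc, mul_div_mul_left _ _ (sqrt_pos.2 hz).ne']

theorem exists_abs_le_of_tendsto_of_abs_le_mul {f : ℝ → ℝ} {l c : ℝ}
    (hf : Tendsto f atTop (𝓝 l)) (hc : ∀ z ∈ Ici 0, |f z| ≤ c * z) :
    ∃ C, ∀ z ∈ Ici 0, |f z| ≤ C := by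
  obtain ⟨Z, hZ⟩ := eventually_atTop.1 (hf.abs.eventually (eventually_le_nhds (lt_add_one |l|)))
  refine ⟨max (|l| + 1) (|c| * max Z 0), fun z hz => ?_⟩
  rcases le_total Z z with hzZ | hzZ
  · exact (hZ z hzZ).trans (le_max_left _ _)
  · calc |f z| ≤ c * z := hc z hz
      _ ≤ |c| * max Z 0 :=
        mul_le_mul (le_abs_self c) (hzZ.trans (le_max_left _ _)) hz (abs_nonneg c)
      _ ≤ _ := le_max_right _ _

/-- The function `φ(z) = z (I₀(z) − I₁(z)) / I₀(z)` tends to `1/2` as `z → +∞`,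
and is bounded on `[0, ∞)`. -/
theorem phi_tendsto_half_and_bounded :
    Tendsto (fun z : ℝ => z * (besselI 0 z - besselI 1 z) / besselI 0 z)
      atTop (nhds (1/2)) ∧
    ∃ C : ℝ, ∀ z ∈ Set.Ici (0:ℝ),
      |z * (besselI 0 z - besselI 1 z) / besselI 0 z| ≤ C := by
  simp only [phi_eq_mul_cosMoment_div]
  refine ⟨tendsto_mul_cosMoment_one_div_cosMoment_zero,
    exists_abs_le_of_tendsto_of_abs_le_mul tendsto_mul_cosMoment_one_div_cosMoment_zero
      (c := 2) fun z (hz : 0 ≤ z) => ?_⟩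
  have hM₀ := cosMoment_zero_pos z
  rw [abs_of_nonneg (by have := cosMoment_nonneg 1 z; positivity), div_le_iff₀ hM₀]
  calc z * cosMoment 1 z ≤ z * (2 * cosMoment 0 z) :=
        mul_le_mul_of_nonneg_left (cosMoment_succ_le 0 z) hz
    _ = 2 * z * cosMoment 0 z := by ring
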